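/- Let ξ₁,…,ξ_D be independent real-valued r.v.s and η a counting r.v. independent of them with P(η ≤ D) = 1. Suppose F_{ξ₁} ∈ 𝒞 and for each k = 2,…,D, either F_{ξ_k} ∈ 𝒞 or \bar F_{ξ_k}(x) = o(\bar F_{ξ₁}(x)). Then the distribution function of S_η = ξ₁+⋯+ξ_η belongs to 𝒞. -/

import Mathlib

/-!
Write `Sₙ = ξ₁ + ⋯ + ξₙ`. Conditioning on `η` gives
`P(S_η > x) = ∑_{n ≤ D} P(η = n) P(Sₙ > x)`, and for antitone positive tails consistent variation
amounts to the one-sided bound `T(xy) ≤ c T(x)` (eventually, for `y < 1` close to `1`), which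
survives nonnegative finite combinations; so it suffices to treat each `Sₙ`. By induction on `n`,
the tail of `Sₙ` is consistently varying and dominates the tail of `ξ₁` up to a constant. In the
step, with `A`, `B` the tails of `Sₙ` and `ξₙ₊₁`, the sum `K = A + B` is consistently varying:
directly in the first alternative, and because `B = o(A)` in the second. For independent summands
with such a `K`, `P(Sₙ + ξₙ₊₁ > x) ~ K(x)`: the upper bound splits `{X + Z > x}` at `x(1 - δ)` and
uses that `K` is dominatedly varying, the lower bound uses that `K` is long-tailed.
-/

open Filter MeasureTheory Topology

/-- The tail function of a real random variable: `x ↦ P(X > x)`. -/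
noncomputable def tailDist {Ω : Type*} [MeasurableSpace Ω] (μ : Measure Ω)
    (X : Ω → ℝ) : ℝ → ℝ :=
  fun x => (μ {ω | x < X ω}).toReal

/-- A tail function `T` is consistently varying:
`lim_{y↑1} limsup_{x→∞} T(xy)/T(x) = 1`. -/
def ConsistentlyVarying (T : ℝ → ℝ) : Prop :=
  Tendsto (fun y : ℝ => Filter.limsup (fun x => T (x * y) / T x) atTop)
    (𝓝[<] (1:ℝ)) (𝓝 1)

open Asymptotics ProbabilityTheory

/-- Equivalent to `ConsistentlyVarying` for antitone positive functions, but free of the junk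
values of `limsup` and `/`. -/
def UpperConsistentlyVarying (T : ℝ → ℝ) : Prop :=
  ∀ c > 1, ∀ᶠ y in 𝓝[<] (1 : ℝ), ∀ᶠ x in atTop, T (x * y) ≤ c * T x

def AsymptoticallyLE (f g : ℝ → ℝ) : Prop :=
  ∀ c > 1, ∀ᶠ x in atTop, f x ≤ c * g x

section Analysis

variable {T A B K W : ℝ → ℝ}

lemma AsymptoticallyLE.isBigO {f g : ℝ → ℝ} (h : AsymptoticallyLE f g) (hf : ∀ x, 0 ≤ f x)
    (hg : ∀ x, 0 ≤ g x) : f =O[atTop] g :=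
  IsBigO.of_bound 2 <| (h 2 one_lt_two).mono fun x hx => by
    rwa [Real.norm_of_nonneg (hf x), Real.norm_of_nonneg (hg x)]

lemma ConsistentlyVarying.upperConsistentlyVarying (hT : ConsistentlyVarying T)
    (hpos : ∀ x, 0 < T x) : UpperConsistentlyVarying T := by
  intro c hc
  filter_upwards [hT.eventually (gt_mem_nhds hc), hT.eventually (lt_mem_nhds one_pos)]
    with y hlt hgt
  -- an unbounded ratio would have the junk limsup `sInf ∅ = 0`
  have hbdd : IsBoundedUnder (· ≤ ·) atTop fun x => T (x * y) / T x := by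
    by_contra h
    have hempty : {a | ∀ᶠ x in atTop, T (x * y) / T x ≤ a} = ∅ :=
      Set.eq_empty_of_forall_notMem fun a ha => h ⟨a, ha⟩
    rw [limsup_eq, hempty, Real.sInf_empty] at hgt
    exact lt_irrefl _ hgt
  filter_upwards [eventually_lt_of_limsup_lt hlt hbdd] with x hx
  exact ((div_lt_iff₀ (hpos x)).1 hx).le

lemma UpperConsistentlyVarying.consistentlyVarying (hT : UpperConsistentlyVarying T)
    (hanti : Antitone T) (hpos : ∀ x, 0 < T x) : ConsistentlyVarying T := by
  have hlimsup : ∀ c > 1, ∀ᶠ y in 𝓝[<] (1 : ℝ),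
      1 ≤ limsup (fun x => T (x * y) / T x) atTop ∧
        limsup (fun x => T (x * y) / T x) atTop ≤ c := by
    intro c hc
    filter_upwards [hT c hc, self_mem_nhdsWithin] with y hy (hy1 : y < 1)
    have hle : ∀ᶠ x in atTop, T (x * y) / T x ≤ c :=
      hy.mono fun x hx => (div_le_iff₀ (hpos x)).2 hx
    have hge : ∀ᶠ x in atTop, 1 ≤ T (x * y) / T x := by
      filter_upwards [eventually_ge_atTop 0] with x hx
      rw [one_le_div (hpos x)]
      exact hanti (mul_le_of_le_one_right hx hy1.le)
    exact ⟨le_limsup_of_frequently_le hge.frequently (isBoundedUnder_of_eventually_le hle),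
      limsup_le_of_le (isCoboundedUnder_le_of_eventually_le _ hge) hle⟩
  refine tendsto_order.2 ⟨fun a ha => (hlimsup 2 one_lt_two).mono fun y hy => ha.trans_le hy.1,
    fun b hb => ?_⟩
  obtain ⟨c, hc1, hcb⟩ := exists_between hb
  exact (hlimsup c hc1).mono fun y hy => hy.2.trans_lt hcb

lemma eventually_pos_nhdsLT_one : ∀ᶠ y in 𝓝[<] (1 : ℝ), 0 < y :=
  mem_of_superset (Ioo_mem_nhdsLT one_pos) fun _ hy => hy.1

lemma upperConsistentlyVarying_of_eventuallyEq_zero (hT : T =ᶠ[atTop] 0) :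
    UpperConsistentlyVarying T := by
  intro c hc
  filter_upwards [eventually_pos_nhdsLT_one] with y hy
  filter_upwards [hT, (tendsto_id.atTop_mul_const hy).eventually hT] with x h1 h2
  simp only [Pi.zero_apply, id] at h1 h2
  rw [h1, h2, mul_zero]

namespace UpperConsistentlyVarying

lemma add (hA : UpperConsistentlyVarying A) (hB : UpperConsistentlyVarying B) :
    UpperConsistentlyVarying (A + B) := by
  intro c hc
  filter_upwards [hA c hc, hB c hc] with y hAy hBy
  filter_upwards [hAy, hBy] with x hAx hBx
  simp only [Pi.add_apply]
  linarith

lemma const_mul (hT : UpperConsistentlyVarying T) {p : ℝ} (hp : 0 ≤ p) :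
    UpperConsistentlyVarying fun x => p * T x := by
  intro c hc
  filter_upwards [hT c hc] with y hy
  filter_upwards [hy] with x hx
  rw [mul_left_comm]
  exact mul_le_mul_of_nonneg_left hx hp

lemma sum {ι : Type*} (s : Finset ι) {f : ι → ℝ → ℝ}
    (hf : ∀ i ∈ s, UpperConsistentlyVarying (f i)) :
    UpperConsistentlyVarying fun x => ∑ i ∈ s, f i x := by
  intro c hc
  filter_upwards [(eventually_all_finset s).2 fun i hi => hf i hi c hc] with y hy
  filter_upwards [(eventually_all_finset s).2 hy] with x hx
  rw [Finset.mul_sum]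
  exact Finset.sum_le_sum hx

lemma of_asymptoticallyLE (hK : UpperConsistentlyVarying K) (hWK : AsymptoticallyLE W K)
    (hKW : AsymptoticallyLE K W) : UpperConsistentlyVarying W := by
  intro c hc
  obtain ⟨c₁, hc₁, hc₁c⟩ : ∃ c₁ > 1, c₁ ^ 3 = c :=
    ⟨c ^ (3⁻¹ : ℝ), Real.one_lt_rpow hc (by norm_num),
      by exact_mod_cast Real.rpow_inv_natCast_pow (n := 3) (by linarith) (by norm_num)⟩
  filter_upwards [hK c₁ hc₁, eventually_pos_nhdsLT_one] with y hKy hy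
  filter_upwards [(tendsto_id.atTop_mul_const hy).eventually (hWK c₁ hc₁), hKy, hKW c₁ hc₁]
    with x h1 h2 h3
  calc W (x * y) ≤ c₁ * K (x * y) := h1
    _ ≤ c₁ * (c₁ * K x) := by gcongr
    _ ≤ c₁ * (c₁ * (c₁ * W x)) := by gcongr
    _ = c * W x := by rw [← hc₁c]; ring

lemma add_isLittleO (hA : UpperConsistentlyVarying A) (hBA : B =o[atTop] A)
    (hA0 : ∀ x, 0 ≤ A x) (hB0 : ∀ x, 0 ≤ B x) : UpperConsistentlyVarying (A + B) := by
  refine hA.of_asymptoticallyLE (fun c hc => ?_) fun c hc => Eventually.of_forall fun x => ?_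
  · filter_upwards [hBA.bound (sub_pos.2 hc)] with x hx
    rw [Real.norm_of_nonneg (hB0 x), Real.norm_of_nonneg (hA0 x)] at hx
    simp only [Pi.add_apply]
    linarith
  · simp only [Pi.add_apply]
    nlinarith [hA0 x, hB0 x]

lemma isBigO_comp_mul (hT : UpperConsistentlyVarying T) (hanti : Antitone T)
    (hT0 : ∀ x, 0 ≤ T x) {δ : ℝ} (hδ : 0 < δ) : (fun x => T (x * δ)) =O[atTop] T := by
  obtain ⟨y, hTy, hy0, hy1⟩ := ((hT 2 one_lt_two).and (Ioo_mem_nhdsLT one_pos)).exists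
  have hpow : ∀ m : ℕ, ∀ᶠ x in atTop, T (x * y ^ m) ≤ 2 ^ m * T x := by
    intro m
    induction m with
    | zero => simp
    | succ m ih =>
      filter_upwards [ih, (tendsto_id.atTop_mul_const (pow_pos hy0 m)).eventually hTy]
        with x h1 h2
      calc T (x * y ^ (m + 1)) = T (x * y ^ m * y) := by ring_nf
        _ ≤ 2 * T (x * y ^ m) := h2
        _ ≤ 2 * (2 ^ m * T x) := by gcongr
        _ = 2 ^ (m + 1) * T x := by ring
  obtain ⟨m, hm⟩ := exists_pow_lt_of_lt_one hδ hy1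
  refine IsBigO.of_bound (2 ^ m) ?_
  filter_upwards [hpow m, eventually_ge_atTop 0] with x hx hx0
  rw [Real.norm_of_nonneg (hT0 _), Real.norm_of_nonneg (hT0 _)]
  exact (hanti (by gcongr)).trans hx

lemma asymptoticallyLE_comp_add (hT : UpperConsistentlyVarying T) (hanti : Antitone T) (a : ℝ) :
    AsymptoticallyLE T fun x => T (x + a) := by
  intro c hc
  obtain ⟨y, hTy, hy0, hy1⟩ := ((hT c hc).and (Ioo_mem_nhdsLT one_pos)).exists
  filter_upwards [(tendsto_atTop_add_const_right _ a tendsto_id).eventually hTy,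
    eventually_ge_atTop (a * y / (1 - y))] with x hx hxa
  rw [div_le_iff₀ (sub_pos.2 hy1)] at hxa
  dsimp only [id] at hx
  exact (hanti (by nlinarith)).trans hx

end UpperConsistentlyVarying

end Analysis

section Tails

variable {Ω : Type*} [MeasurableSpace Ω] {μ : Measure Ω} {X Z : Ω → ℝ}

lemma tailDist_nonneg (X : Ω → ℝ) (x : ℝ) : 0 ≤ tailDist μ X x :=
  ENNReal.toReal_nonneg

lemma tailDist_antitone [IsFiniteMeasure μ] (X : Ω → ℝ) : Antitone (tailDist μ X) :=
  fun _ _ huv => ENNReal.toReal_mono (measure_ne_top μ _)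
    (measure_mono fun _ hω => huv.trans_lt hω)

lemma tailDist_eq_one_sub_cdf [IsProbabilityMeasure μ] (hX : Measurable X) (x : ℝ) :
    tailDist μ X x = 1 - cdf (μ.map X) x := by
  have := Measure.isProbabilityMeasure_map (μ := μ) hX.aemeasurable
  rw [cdf_eq_real, ← probReal_compl_eq_one_sub measurableSet_Iic,
    Set.compl_Iic, map_measureReal_apply hX measurableSet_Ioi]
  rfl

lemma tendsto_tailDist_atTop [IsProbabilityMeasure μ] (hX : Measurable X) :
    Tendsto (tailDist μ X) atTop (𝓝 0) := by
  simpa [funext (tailDist_eq_one_sub_cdf hX)] using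
    (tendsto_cdf_atTop (μ.map X)).const_sub 1

lemma tendsto_tailDist_atBot [IsProbabilityMeasure μ] (hX : Measurable X) :
    Tendsto (tailDist μ X) atBot (𝓝 1) := by
  simpa [funext (tailDist_eq_one_sub_cdf hX)] using
    (tendsto_cdf_atBot (μ.map X)).const_sub 1

lemma measureReal_inter_eq_mul_tailDist (h : IndepFun X Z μ) (u v : ℝ) :
    μ.real ({ω | u < X ω} ∩ {ω | v < Z ω}) = tailDist μ X u * tailDist μ Z v := by
  rw [measureReal_def, tailDist, tailDist, ← ENNReal.toReal_mul]
  exact congrArg ENNReal.toReal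
    (h.measure_inter_preimage_eq_mul _ _ measurableSet_Ioi measurableSet_Ioi)

lemma tailDist_add_le [IsFiniteMeasure μ] (h : IndepFun X Z μ) (x s : ℝ) :
    tailDist μ (X + Z) x ≤
      tailDist μ X (x - s) + tailDist μ Z (x - s) + tailDist μ X s * tailDist μ Z s := by
  rw [← measureReal_inter_eq_mul_tailDist h]
  have hsub : {ω | x < (X + Z) ω} ⊆ {ω | x - s < X ω} ∪ {ω | x - s < Z ω} ∪
      ({ω | s < X ω} ∩ {ω | s < Z ω}) := by
    intro ω (hω : x < X ω + Z ω)
    by_contra! hnot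
    simp only [Set.mem_union, Set.mem_inter_iff, Set.mem_ofPred_eq, not_or, not_and, not_lt]
      at hnot
    obtain ⟨⟨hX, hZ⟩, hXZ⟩ := hnot
    exact (hXZ (by linarith)).not_gt (by linarith)
  calc tailDist μ (X + Z) x = μ.real {ω | x < (X + Z) ω} := rfl
    _ ≤ _ := measureReal_mono hsub
    _ ≤ _ := (measureReal_union_le _ _).trans (by gcongr; exact measureReal_union_le _ _)
    _ = _ := rfl

lemma tailDist_add_ge [IsFiniteMeasure μ] (h : IndepFun X Z μ)
    (hX : Measurable X) (hZ : Measurable Z) (x t : ℝ) :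
    tailDist μ X (x - t) * tailDist μ Z t + tailDist μ Z (x - t) * tailDist μ X t -
      tailDist μ X (x - t) * tailDist μ Z (x - t) ≤ tailDist μ (X + Z) x := by
  set E := {ω | x - t < X ω} ∩ {ω | t < Z ω}
  set F := {ω | x - t < Z ω} ∩ {ω | t < X ω}
  have hunion : E ∪ F ⊆ {ω | x < (X + Z) ω} := by
    rintro ω (⟨h1, h2⟩ | ⟨h1, h2⟩) <;>
    · simp only [Set.mem_ofPred_eq, Pi.add_apply] at h1 h2 ⊢
      linarith
  have hinter : E ∩ F ⊆ {ω | x - t < X ω} ∩ {ω | x - t < Z ω} :=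
    fun ω h => ⟨h.1.1, h.2.1⟩
  have hF : MeasurableSet F :=
    (measurableSet_lt measurable_const hZ).inter (measurableSet_lt measurable_const hX)
  rw [← measureReal_inter_eq_mul_tailDist h, ← measureReal_inter_eq_mul_tailDist h.symm,
    ← measureReal_inter_eq_mul_tailDist h, ← measureReal_union_add_inter hF]
  have := measureReal_mono hunion (μ := μ)
  have := measureReal_mono hinter (μ := μ)
  change _ ≤ μ.real {ω | x < (X + Z) ω}
  linarith

end Tails

section SumOfTwo

variable {Ω : Type*} [MeasurableSpace Ω] {μ : Measure Ω} [IsProbabilityMeasure μ]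
  {X Z : Ω → ℝ}

lemma tailDist_add_asymptoticallyLE (h : IndepFun X Z μ) (hZ : Measurable Z)
    (hK : UpperConsistentlyVarying (tailDist μ X + tailDist μ Z)) :
    AsymptoticallyLE (tailDist μ (X + Z)) (tailDist μ X + tailDist μ Z) := by
  set A := tailDist μ X
  set B := tailDist μ Z
  have hB0 : ∀ x, 0 ≤ B x := tailDist_nonneg Z
  have hK0 : ∀ x, 0 ≤ (A + B) x := fun x => add_nonneg (tailDist_nonneg X x) (hB0 x)
  intro c hc
  obtain ⟨y, hKy, hy0, hy1⟩ :=
    ((hK ((1 + c) / 2) (by linarith)).and (Ioo_mem_nhdsLT one_pos)).exists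
  have hδ : 0 < 1 - y := sub_pos.2 hy1
  -- `K (x * (1 - y)) = O(K x)` by dominated variation, and `B → 0`
  have hcross : (fun x => (A + B) (x * (1 - y)) * B (x * (1 - y))) =o[atTop] (A + B) := by
    refine IsLittleO.congr_right ?_ fun x => mul_one ((A + B) x)
    exact (hK.isBigO_comp_mul ((tailDist_antitone X).add (tailDist_antitone Z)) hK0 hδ)
      |>.mul_isLittleO ((isLittleO_one_iff ℝ).2
        ((tendsto_tailDist_atTop hZ).comp (tendsto_id.atTop_mul_const hδ)))
  filter_upwards [hKy, hcross.bound (by linarith : 0 < c - (1 + c) / 2)] with x hKx hx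
  rw [Real.norm_of_nonneg (mul_nonneg (hK0 _) (hB0 _)), Real.norm_of_nonneg (hK0 x)] at hx
  have hAK : A (x * (1 - y)) ≤ (A + B) (x * (1 - y)) := le_add_of_nonneg_right (hB0 _)
  calc tailDist μ (X + Z) x ≤ (A + B) (x * y) + A (x * (1 - y)) * B (x * (1 - y)) := by
        have := tailDist_add_le h x (x * (1 - y))
        rw [show x - x * (1 - y) = x * y by ring] at this
        simp only [Pi.add_apply]
        linarith
    _ ≤ (1 + c) / 2 * (A + B) x + (A + B) (x * (1 - y)) * B (x * (1 - y)) := by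
        gcongr
        exact hB0 _
    _ ≤ c * (A + B) x := by linarith

lemma asymptoticallyLE_tailDist_add (h : IndepFun X Z μ) (hX : Measurable X)
    (hZ : Measurable Z) (hK : UpperConsistentlyVarying (tailDist μ X + tailDist μ Z)) :
    AsymptoticallyLE (tailDist μ X + tailDist μ Z) (tailDist μ (X + Z)) := by
  set A := tailDist μ X
  set B := tailDist μ Z
  intro c hc
  set ε := (c - 1) / (4 * c)
  have hε : 0 < ε := by positivity
  have hcε : c * (1 - 2 * ε) = (1 + c) / 2 := by simp only [ε]; field_simp; ring
  have hε1 : 1 - ε < 1 := by linarith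
  obtain ⟨t, (hAt : 1 - ε < A t), (hBt : 1 - ε < B t)⟩ :=
    (((tendsto_tailDist_atBot (μ := μ) hX).eventually (Ioi_mem_nhds hε1)).and
      ((tendsto_tailDist_atBot (μ := μ) hZ).eventually (Ioi_mem_nhds hε1))).exists
  filter_upwards [hK.asymptoticallyLE_comp_add ((tailDist_antitone X).add (tailDist_antitone Z))
      (-t) ((1 + c) / 2) (by linarith),
    ((tendsto_tailDist_atTop (μ := μ) hZ).comp
      (tendsto_atTop_add_const_right _ (-t) tendsto_id)).eventually (Iio_mem_nhds hε)]
    with x hKx (hBx : B (x + -t) < ε)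
  rw [← sub_eq_add_neg] at hKx hBx
  have hA0 := tailDist_nonneg (μ := μ) X (x - t)
  have hB0 := tailDist_nonneg (μ := μ) Z (x - t)
  have hlow : (1 - 2 * ε) * (A + B) (x - t) ≤ tailDist μ (X + Z) x := by
    have := tailDist_add_ge h hX hZ x t
    simp only [Pi.add_apply]
    linarith [mul_le_mul_of_nonneg_left hBt.le hA0, mul_le_mul_of_nonneg_left hAt.le hB0,
      mul_le_mul_of_nonneg_left hBx.le hA0, mul_nonneg hε.le hB0]
  calc (A + B) x ≤ (1 + c) / 2 * (A + B) (x - t) := hKx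
    _ = c * ((1 - 2 * ε) * (A + B) (x - t)) := by rw [← hcε]; ring
    _ ≤ c * tailDist μ (X + Z) x := by gcongr

end SumOfTwo

section RandomSum

variable {Ω : Type*} [MeasurableSpace Ω] {μ : Measure Ω}

lemma tailDist_comp_eq_sum [IsFiniteMeasure μ] {β : Type*} [MeasurableSpace β] {η : Ω → ℕ}
    {Y : Ω → β} {f : ℕ → β → ℝ} {D : ℕ} (hη : Measurable η) (hY : Measurable Y)
    (hf : ∀ n, Measurable (f n)) (hindep : IndepFun η Y μ)
    (hηD : ∀ᵐ ω ∂μ, η ω ≤ D) (x : ℝ) :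
    tailDist μ (fun ω => f (η ω) (Y ω)) x =
      ∑ n ∈ Finset.range (D + 1), μ.real (η ⁻¹' {n}) * tailDist μ (fun ω => f n (Y ω)) x := by
  set s : ℕ → Set Ω := fun n => η ⁻¹' {n} ∩ Y ⁻¹' {y | x < f n y}
  have hae : {ω | x < f (η ω) (Y ω)} =ᵐ[μ] ⋃ n ∈ Finset.range (D + 1), s n := by
    rw [eventuallyEq_set]
    filter_upwards [hηD] with ω hω
    simp only [s, Set.mem_iUnion, Set.mem_inter_iff, Set.mem_preimage, Set.mem_singleton_iff,
      Finset.mem_range, Set.mem_ofPred_eq, exists_prop]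
    exact ⟨fun h => ⟨η ω, Nat.lt_succ_of_le hω, rfl, h⟩, by rintro ⟨n, -, rfl, h⟩; exact h⟩
  have hfn : ∀ n, MeasurableSet {y | x < f n y} := fun n =>
    measurableSet_lt measurable_const (hf n)
  have hs : ∀ n ∈ Finset.range (D + 1), MeasurableSet (s n) := fun n _ =>
    (hη (measurableSet_singleton n)).inter (hY (hfn n))
  have hdisj : Set.PairwiseDisjoint ↑(Finset.range (D + 1)) s := fun i _ j _ hij =>
    Set.disjoint_left.2 fun ω hi hj => hij (hi.1.symm.trans hj.1)
  calc tailDist μ (fun ω => f (η ω) (Y ω)) x = μ.real (⋃ n ∈ Finset.range (D + 1), s n) :=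
        measureReal_congr hae
    _ = ∑ n ∈ Finset.range (D + 1), μ.real (s n) := measureReal_biUnion_finset hdisj hs
    _ = _ := Finset.sum_congr rfl fun n _ => by
        simp only [s, measureReal_def, hindep.measure_inter_preimage_eq_mul _ _
          (measurableSet_singleton n) (hfn n), ENNReal.toReal_mul]
        rfl

end RandomSum

lemma upperConsistentlyVarying_tailDist_partialSum {Ω : Type*} [MeasurableSpace Ω]
    {μ : Measure Ω} [IsProbabilityMeasure μ] {D : ℕ} {ξ : ℕ → Ω → ℝ}
    (hmeas : ∀ k, Measurable (ξ k)) (hindep : iIndepFun ξ μ)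
    (h1 : UpperConsistentlyVarying (tailDist μ (ξ 1)))
    (hk : ∀ k, 2 ≤ k → k ≤ D → UpperConsistentlyVarying (tailDist μ (ξ k)) ∨
      tailDist μ (ξ k) =o[atTop] tailDist μ (ξ 1))
    {n : ℕ} (hn : 1 ≤ n) (hnD : n ≤ D) :
    UpperConsistentlyVarying (tailDist μ fun ω => ∑ k ∈ Finset.Icc 1 n, ξ k ω) ∧
      tailDist μ (ξ 1) =O[atTop] tailDist μ fun ω => ∑ k ∈ Finset.Icc 1 n, ξ k ω := by
  induction n, hn using Nat.le_induction with
  | base => simpa using ⟨h1, isBigO_refl _ _⟩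
  | succ n hn ih =>
    obtain ⟨hA, hξA⟩ := ih (by omega)
    set S : Ω → ℝ := fun ω => ∑ k ∈ Finset.Icc 1 n, ξ k ω
    have hS : Measurable S := Finset.measurable_sum _ fun k _ => hmeas k
    have hSξ : IndepFun S (ξ (n + 1)) μ := by
      have := hindep.indepFun_finsetSum_of_notMem hmeas (s := Finset.Icc 1 n) (i := n + 1)
        (by simp)
      rwa [show ∑ k ∈ Finset.Icc 1 n, ξ k = S from funext fun ω => Finset.sum_apply ω _ _]
        at this
    have hK : UpperConsistentlyVarying (tailDist μ S + tailDist μ (ξ (n + 1))) := by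
      rcases hk (n + 1) (by omega) hnD with hB | hB
      · exact hA.add hB
      · exact hA.add_isLittleO (hB.trans_isBigO hξA) (tailDist_nonneg S) (tailDist_nonneg _)
    have hK0 : ∀ x, 0 ≤ (tailDist μ S + tailDist μ (ξ (n + 1))) x := fun x =>
      add_nonneg (tailDist_nonneg _ x) (tailDist_nonneg _ x)
    have hAK : tailDist μ S =O[atTop] (tailDist μ S + tailDist μ (ξ (n + 1))) :=
      isBigO_of_le _ fun x => by
        rw [Real.norm_of_nonneg (tailDist_nonneg _ x), Real.norm_of_nonneg (hK0 x)]
        exact le_add_of_nonneg_right (tailDist_nonneg _ x)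
    have hKW := asymptoticallyLE_tailDist_add hSξ hS (hmeas (n + 1)) hK
    simp only [Finset.sum_Icc_succ_top (by omega : 1 ≤ n + 1)]
    exact ⟨hK.of_asymptoticallyLE (tailDist_add_asymptoticallyLE hSξ (hmeas (n + 1)) hK) hKW,
      hξA.trans (hAK.trans (hKW.isBigO hK0 (tailDist_nonneg _)))⟩

theorem randomly_stopped_sum_consistently_varying_finite_support_general
    {Ω : Type*} [MeasurableSpace Ω] (μ : Measure Ω) [IsProbabilityMeasure μ]
    (D : ℕ) (ξ : ℕ → Ω → ℝ) (η : Ω → ℕ)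
    (hmeas : ∀ k, Measurable (ξ k)) (hηmeas : Measurable η)
    (hindep : ProbabilityTheory.iIndepFun ξ μ)
    (hindepη : ProbabilityTheory.IndepFun η (fun ω => fun k => ξ k ω) μ)
    (hηD : ∀ᵐ ω ∂μ, η ω ≤ D)
    (hpos : ∀ k x, 0 < tailDist μ (ξ k) x)
    (hposS : ∀ x, 0 < tailDist μ (fun ω => ∑ k ∈ Finset.Icc 1 (η ω), ξ k ω) x)
    (h1 : ConsistentlyVarying (tailDist μ (ξ 1)))
    (hk : ∀ k, 2 ≤ k → k ≤ D →
      ConsistentlyVarying (tailDist μ (ξ k)) ∨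
        Tendsto (fun x => tailDist μ (ξ k) x / tailDist μ (ξ 1) x) atTop (𝓝 0)) :
    ConsistentlyVarying (tailDist μ (fun ω => ∑ k ∈ Finset.Icc 1 (η ω), ξ k ω)) := by
  have hk_upper : ∀ k, 2 ≤ k → k ≤ D → UpperConsistentlyVarying (tailDist μ (ξ k)) ∨
      tailDist μ (ξ k) =o[atTop] tailDist μ (ξ 1) := fun k hk2 hkD =>
    (hk k hk2 hkD).imp (·.upperConsistentlyVarying (hpos k)) fun h =>
      (isLittleO_iff_tendsto' (.of_forall fun x hx => absurd hx (hpos 1 x).ne')).2 h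
  have hterm : ∀ n ∈ Finset.range (D + 1), UpperConsistentlyVarying fun x =>
      μ.real (η ⁻¹' {n}) * tailDist μ (fun ω => ∑ k ∈ Finset.Icc 1 n, ξ k ω) x := by
    intro n hn
    refine UpperConsistentlyVarying.const_mul ?_ measureReal_nonneg
    rcases Nat.eq_zero_or_pos n with rfl | hn0
    · exact upperConsistentlyVarying_of_eventuallyEq_zero <|
        (eventually_ge_atTop 0).mono fun x hx => by simp [tailDist, hx.not_gt]
    · exact (upperConsistentlyVarying_tailDist_partialSum hmeas hindep
        (h1.upperConsistentlyVarying (hpos 1)) hk_upper hn0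
        (by simpa [Nat.lt_succ_iff] using hn)).1
  have hdecomp := funext (tailDist_comp_eq_sum (f := fun n g => ∑ k ∈ Finset.Icc 1 n, g k)
    hηmeas (measurable_pi_lambda _ hmeas)
    (fun n => Finset.measurable_sum _ fun k _ => measurable_pi_apply k) hindepη hηD)
  refine UpperConsistentlyVarying.consistentlyVarying ?_ (tailDist_antitone _) hposS
  rw [hdecomp]
  exact UpperConsistentlyVarying.sum _ hterm

/-- Theorem 1 of the paper: if `η ≤ D` a.s. is a counting r.v. independent of the
independent r.v.s `ξ₁,…,ξ_D`, `F_{ξ₁} ∈ 𝒞`, and for each `k = 2,…,D` either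
`F_{ξ_k} ∈ 𝒞` or `P(ξ_k > x) = o(P(ξ₁ > x))`, then the distribution of the
randomly stopped sum `S_η` has a consistently varying tail. -/
theorem randomly_stopped_sum_consistently_varying_finite_support
    {Ω : Type*} [MeasurableSpace Ω] (μ : Measure Ω) [IsProbabilityMeasure μ]
    (D : ℕ) (ξ : ℕ → Ω → ℝ) (η : Ω → ℕ)
    (hmeas : ∀ k, Measurable (ξ k)) (hηmeas : Measurable η)
    (hindep : ProbabilityTheory.iIndepFun ξ μ)
    (hindepη : ProbabilityTheory.IndepFun η (fun ω => fun k => ξ k ω) μ)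
    (hηD : ∀ᵐ ω ∂μ, η ω ≤ D)
    (hηnondeg : μ {ω | η ω = 0} < 1)
    (hpos : ∀ k x, 0 < tailDist μ (ξ k) x)
    (hposS : ∀ x, 0 < tailDist μ (fun ω => ∑ k ∈ Finset.Icc 1 (η ω), ξ k ω) x)
    (h1 : ConsistentlyVarying (tailDist μ (ξ 1)))
    (hk : ∀ k, 2 ≤ k → k ≤ D →
      ConsistentlyVarying (tailDist μ (ξ k)) ∨
        Tendsto (fun x => tailDist μ (ξ k) x / tailDist μ (ξ 1) x) atTop (𝓝 0)) :
    ConsistentlyVarying (tailDist μ (fun ω => ∑ k ∈ Finset.Icc 1 (η ω), ξ k ω)) :=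
  randomly_stopped_sum_consistently_varying_finite_support_general μ D ξ η hmeas hηmeas hindep
    hindepη hηD hpos hposS h1 hk
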